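/- arXiv:math/0508233 — 3 statements merged into one kernel-verified Lean document; each statement's English description precedes it below -/
import Mathlib

section
/- For positive integers m and n with n > 1, the alternating sum ∑_{l=0}^{n-1} (-1)^l l^m equals (1/2)((-1)^{n+1} E_m(n) + E_m), where E_m(x) is the m-th Euler polynomial and E_m = E_m(0) is the m-th Euler number. -/
/-- The Euler polynomials, defined by the recurrence
`E_n(x) = x^n - (1/2) * ∑_{k<n} C(n,k) E_k(x)`,
equivalent to the generating function `2 e^{xt}/(e^t+1) = ∑ E_n(x) t^n/n!`. -/
noncomputable def eulerPoly : ℕ → Polynomial ℚ := fun n =>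
  n.strongRecOn fun n ih =>
    Polynomial.X ^ n - Polynomial.C (1/2 : ℚ) *
      ∑ k : Fin n, Polynomial.C ((n.choose k : ℚ)) * ih k k.2

/-- The Euler numbers `E_n = E_n(0)`, i.e. with EGF `2/(e^t+1)`. -/
noncomputable def eulerNumber (n : ℕ) : ℚ := (eulerPoly n).eval 0

/-! The recurrence for `E_n` says that `E_n(x+1) + E_n(x) = 2 x^n`, so `(-1)^l l^m` is the
difference `F(l+1) - F(l)` of `F(l) = -(-1)^l E_m(l) / 2`, and the alternating sum telescopes to
`F(n) - F(0)`. -/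

open Finset Polynomial

theorem eval_eulerPoly (n : ℕ) (x : ℚ) :
    (eulerPoly n).eval x =
      x ^ n - 1 / 2 * ∑ k ∈ range n, (n.choose k : ℚ) * (eulerPoly k).eval x := by
  rw [eulerPoly, Nat.strongRecOn, WellFounded.fix_eq]
  simp [eval_finsetSum, ← Fin.sum_univ_eq_sum_range, eulerPoly, Nat.strongRecOn]

theorem sum_range_choose_mul_pow {R : Type*} [CommRing R] (n : ℕ) (x : R) :
    ∑ k ∈ range n, (n.choose k : R) * x ^ k = (x + 1) ^ n - x ^ n := by
  rw [add_pow, sum_range_succ, Nat.choose_self]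
  simp only [one_pow, mul_one, Nat.cast_one, add_sub_cancel_right, mul_comm]

theorem eval_eulerPoly_add_one_add (n : ℕ) (x : ℚ) :
    (eulerPoly n).eval (x + 1) + (eulerPoly n).eval x = 2 * x ^ n := by
  induction n using Nat.strong_induction_on with
  | _ n ih =>
    have hsum : ∑ k ∈ range n, (n.choose k : ℚ) * (eulerPoly k).eval (x + 1)
        + ∑ k ∈ range n, (n.choose k : ℚ) * (eulerPoly k).eval x =
          2 * ((x + 1) ^ n - x ^ n) := by
      rw [← sum_add_distrib, ← sum_range_choose_mul_pow, mul_sum]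
      refine sum_congr rfl fun k hk => ?_
      rw [← mul_add, ih k (mem_range.mp hk)]
      ring
    rw [eval_eulerPoly n (x + 1), eval_eulerPoly n x]
    linear_combination (-1 / 2 : ℚ) * hsum

theorem stmt_0_general (m n : ℕ) :
    (∑ l ∈ Finset.range n, (-1 : ℚ) ^ l * (l : ℚ) ^ m) =
      (1/2) * ((-1 : ℚ) ^ (n + 1) * (eulerPoly m).eval (n : ℚ) + eulerNumber m) := by
  induction n with
  | zero => simp [eulerNumber]
  | succ n ih =>
    rw [sum_range_succ, ih, eulerNumber]
    push_cast
    linear_combination -(-1 : ℚ) ^ n / 2 * eval_eulerPoly_add_one_add m n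

theorem stmt_0 (m n : ℕ) (hm : 0 < m) (hn : 1 < n) :
    (∑ l ∈ Finset.range n, (-1 : ℚ) ^ l * (l : ℚ) ^ m) =
      (1/2) * ((-1 : ℚ) ^ (n + 1) * (eulerPoly m).eval (n : ℚ) + eulerNumber m) :=
  stmt_0_general m n
end

section
/- For s ∈ ℂ with Re(s) > 0 and x ∈ ℝ with 0 < x < 1, (1/Γ(s)) ∫_0^∞ t^{s-1} · 2e^{-xt}/(1+e^{-t}) dt = 2 ∑_{n=0}^{∞} (-1)^n/(n+x)^s. -/
/-!
Write `K_c(t) = 2 e^{-ct} / (1 + e^{-t})`. Since `K_c + K_{c+1} = 2 e^{-ct}` and the Mellin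
transform of `e^{-ct}` is `Γ(s) c^{-s}`, induction gives
`M[K_x](s) = 2 Γ(s) ∑_{n<N} (-1)^n (n+x)^{-s} + (-1)^N M[K_{x+N}](s)`.
As `0 ≤ K_c(t) ≤ 2 e^{-ct}`, the remainder is bounded by `2 Γ(Re s) (x+N)^{-Re s} → 0`.
Termwise integration of the geometric series would instead need `∑ (n+x)^{-Re s} < ∞`,
which fails for `Re s ≤ 1`.
-/

open MeasureTheory Set Filter Topology

section MellinExpDecay

variable {E : Type*} [NormedAddCommGroup E] [NormedSpace ℂ E] {s : ℂ} {p C : ℝ} {f : ℝ → E}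

lemma integrableOn_rpow_mul_exp_neg_mul_Ioi {a : ℝ} (ha : 0 < a) (hp : 0 < p) :
    IntegrableOn (fun t : ℝ => t ^ (a - 1) * Real.exp (-p * t)) (Ioi 0) := by
  simpa only [Real.rpow_one] using
    integrableOn_rpow_mul_exp_neg_mul_rpow (s := a - 1) (by linarith) one_pos hp

lemma mellinConvergent_of_norm_le_exp (hs : 0 < s.re) (hp : 0 < p)
    (hf : AEStronglyMeasurable f (volume.restrict (Ioi 0)))
    (hbound : ∀ t ∈ Ioi (0 : ℝ), ‖f t‖ ≤ C * Real.exp (-p * t)) :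
    MellinConvergent f s := by
  refine (mellin_convergent_iff_norm subset_rfl measurableSet_Ioi hf).mpr ?_
  refine ((integrableOn_rpow_mul_exp_neg_mul_Ioi hs hp).const_mul C).mono' ?_ ?_
  · exact ((continuousOn_id.rpow_const fun t ht => Or.inl (ne_of_gt ht)).aestronglyMeasurable
      measurableSet_Ioi).mul hf.norm
  · refine (ae_restrict_iff' measurableSet_Ioi).mpr (Eventually.of_forall fun t ht => ?_)
    have hpow : 0 < t ^ (s.re - 1) := Real.rpow_pos_of_pos ht _
    rw [Real.norm_of_nonneg (by positivity), mul_left_comm]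
    exact mul_le_mul_of_nonneg_left (hbound t ht) hpow.le

lemma norm_mellin_le_of_norm_le_exp (hs : 0 < s.re) (hp : 0 < p)
    (hbound : ∀ t ∈ Ioi (0 : ℝ), ‖f t‖ ≤ C * Real.exp (-p * t)) :
    ‖mellin f s‖ ≤ C * (p ^ (-s.re) * Real.Gamma s.re) := by
  calc ‖mellin f s‖ ≤ ∫ t in Ioi 0, C * (t ^ (s.re - 1) * Real.exp (-p * t)) := by
        refine norm_integral_le_of_norm_le
          ((integrableOn_rpow_mul_exp_neg_mul_Ioi hs hp).const_mul C)
          ((ae_restrict_iff' measurableSet_Ioi).mpr (Eventually.of_forall fun t ht => ?_))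
        rw [norm_smul, Complex.norm_cpow_eq_rpow_re_of_pos ht, Complex.sub_re, Complex.one_re,
          mul_left_comm]
        exact mul_le_mul_of_nonneg_left (hbound t ht) (Real.rpow_pos_of_pos ht _).le
    _ = C * (p ^ (-s.re) * Real.Gamma s.re) := by
        simp_rw [integral_const_mul, neg_mul, Real.integral_rpow_mul_exp_neg_mul_Ioi hs hp,
          one_div, Real.inv_rpow hp.le, Real.rpow_neg hp.le]

end MellinExpDecay

lemma mellin_exp_neg_mul {s : ℂ} (hs : 0 < s.re) {p : ℝ} (hp : 0 < p) :
    mellin (fun t : ℝ => (Real.exp (-p * t) : ℂ)) s = Complex.Gamma s / (p : ℂ) ^ s := by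
  have := mellin_comp_mul_left (fun t : ℝ => (Real.exp (-t) : ℂ)) s hp
  simp only [← neg_mul] at this
  rw [this, ← Complex.GammaIntegral_eq_mellin, ← Complex.Gamma_eq_integral hs, smul_eq_mul,
    Complex.cpow_neg, div_eq_inv_mul]

noncomputable def eulerKernel (c t : ℝ) : ℝ := 2 * Real.exp (-c * t) / (1 + Real.exp (-t))

lemma continuous_eulerKernel (c : ℝ) : Continuous (eulerKernel c) := by
  unfold eulerKernel
  fun_prop (disch := intro t; positivity)

lemma eulerKernel_add_eulerKernel_add_one (c t : ℝ) :
    eulerKernel c t + eulerKernel (c + 1) t = 2 * Real.exp (-c * t) := by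
  have hexp : Real.exp (-(c + 1) * t) = Real.exp (-c * t) * Real.exp (-t) := by
    rw [← Real.exp_add]; ring_nf
  unfold eulerKernel
  rw [hexp]
  field_simp

lemma norm_eulerKernel_le (c t : ℝ) : ‖(eulerKernel c t : ℂ)‖ ≤ 2 * Real.exp (-c * t) := by
  rw [Complex.norm_real, Real.norm_of_nonneg (by unfold eulerKernel; positivity)]
  exact div_le_self (by positivity) (le_add_of_nonneg_right (Real.exp_pos _).le)

section EulerKernelMellin

variable {s : ℂ}

lemma mellinConvergent_eulerKernel (hs : 0 < s.re) {c : ℝ} (hc : 0 < c) :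
    MellinConvergent (fun t => (eulerKernel c t : ℂ)) s :=
  mellinConvergent_of_norm_le_exp hs hc
    (Complex.continuous_ofReal.comp (continuous_eulerKernel c)).aestronglyMeasurable
    fun t _ => norm_eulerKernel_le c t

lemma mellin_eulerKernel_add_mellin_eulerKernel_add_one (hs : 0 < s.re) {c : ℝ} (hc : 0 < c) :
    mellin (fun t => (eulerKernel c t : ℂ)) s + mellin (fun t => (eulerKernel (c + 1) t : ℂ)) s =
      2 * (Complex.Gamma s / (c : ℂ) ^ s) := by
  rw [← (hasMellin_add (mellinConvergent_eulerKernel hs hc)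
    (mellinConvergent_eulerKernel hs (by linarith))).2, ← mellin_exp_neg_mul hs hc,
    ← smul_eq_mul, ← mellin_const_smul]
  simp only [← Complex.ofReal_add, eulerKernel_add_eulerKernel_add_one, Complex.ofReal_mul,
    Complex.ofReal_ofNat, smul_eq_mul]

lemma mellin_eulerKernel_eq_sum_add (hs : 0 < s.re) {x : ℝ} (hx : 0 < x) (N : ℕ) :
    mellin (fun t => (eulerKernel x t : ℂ)) s =
      Complex.Gamma s * (2 * ∑ n ∈ Finset.range N, (-1 : ℂ) ^ n / ((n : ℂ) + (x : ℂ)) ^ s) +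
        (-1 : ℂ) ^ N * mellin (fun t => (eulerKernel (x + N) t : ℂ)) s := by
  induction N with
  | zero => simp
  | succ N ih =>
    have hstep := mellin_eulerKernel_add_mellin_eulerKernel_add_one hs
      (by positivity : 0 < x + N)
    rw [ih, Finset.sum_range_succ, Nat.cast_succ, ← add_assoc, pow_succ]
    push_cast at hstep
    rw [add_comm (x : ℂ), ← eq_sub_iff_add_eq'] at hstep
    rw [hstep]
    ring

lemma tendsto_mellin_eulerKernel_atTop (hs : 0 < s.re) :
    Tendsto (fun c : ℝ => mellin (fun t => (eulerKernel c t : ℂ)) s) atTop (𝓝 0) := by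
  have hbound : ∀ᶠ c : ℝ in atTop,
      ‖mellin (fun t => (eulerKernel c t : ℂ)) s‖ ≤ 2 * (c ^ (-s.re) * Real.Gamma s.re) :=
    (eventually_gt_atTop 0).mono fun c hc =>
      norm_mellin_le_of_norm_le_exp hs hc fun t _ => norm_eulerKernel_le c t
  have hlim : Tendsto (fun c : ℝ => 2 * (c ^ (-s.re) * Real.Gamma s.re)) atTop (𝓝 0) := by
    simpa using ((tendsto_rpow_neg_atTop hs).mul_const (Real.Gamma s.re)).const_mul 2
  exact squeeze_zero_norm' hbound hlim

end EulerKernelMellin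

theorem stmt_7_general (s : ℂ) (hs : 0 < s.re) (x : ℝ) (hx0 : 0 < x) :
    Filter.Tendsto
      (fun N => 2 * ∑ n ∈ Finset.range N, (-1 : ℂ) ^ n / ((n : ℂ) + (x : ℂ)) ^ s)
      Filter.atTop
      (nhds ((1 / Complex.Gamma s) *
        ∫ t in Set.Ioi (0 : ℝ),
          (t : ℂ) ^ (s - 1) * (2 * Real.exp (-x * t) / (1 + Real.exp (-t)) : ℝ))) := by
  set R : ℕ → ℂ := fun N => (-1 : ℂ) ^ N * mellin (fun t => (eulerKernel (x + N) t : ℂ)) s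
  have hpartial : ∀ N : ℕ, 2 * ∑ n ∈ Finset.range N, (-1 : ℂ) ^ n / ((n : ℂ) + (x : ℂ)) ^ s =
      (1 / Complex.Gamma s) * (mellin (fun t => (eulerKernel x t : ℂ)) s - R N) := by
    intro N
    rw [mellin_eulerKernel_eq_sum_add hs hx0 N]
    field_simp [Complex.Gamma_ne_zero_of_re_pos hs]
    ring
  have hR : Tendsto R atTop (𝓝 0) := by
    refine tendsto_zero_iff_norm_tendsto_zero.mpr ?_
    simpa [R] using ((tendsto_mellin_eulerKernel_atTop hs).comp
      (tendsto_atTop_add_const_left _ x tendsto_natCast_atTop_atTop)).norm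
  have hlim := ((tendsto_const_nhds (x := mellin (fun t => (eulerKernel x t : ℂ)) s)).sub
    hR).const_mul (1 / Complex.Gamma s)
  rw [sub_zero] at hlim
  -- the integral in the goal is `mellin (fun t => (eulerKernel x t : ℂ)) s`, unfolded
  exact hlim.congr fun N => (hpartial N).symm

theorem stmt_7 (s : ℂ) (hs : 0 < s.re) (x : ℝ) (hx0 : 0 < x) (hx1 : x < 1) :
    Filter.Tendsto
      (fun N => 2 * ∑ n ∈ Finset.range N, (-1 : ℂ) ^ n / ((n : ℂ) + (x : ℂ)) ^ s)
      Filter.atTop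
      (nhds ((1 / Complex.Gamma s) *
        ∫ t in Set.Ioi (0 : ℝ),
          (t : ℂ) ^ (s - 1) * (2 * Real.exp (-x * t) / (1 + Real.exp (-t)) : ℝ))) :=
  stmt_7_general s hs x hx0
end

section
/- For x ∈ ℝ with 0 < x < 1 and positive integer n, the Euler zeta function ζ_E(s,x) = 2∑_{m=0}^{∞}(-1)^m/(m+x)^s, analytically continued to all s ∈ ℂ, satisfies ζ_E(-n, x) = E_n(x), where E_n(x) is the n-th Euler polynomial. -/
/-!
Splitting the alternating series into even and odd terms gives
`ζ_E(s, x) = 2^{1-s} (ζ(s, x/2) - ζ(s, (x+1)/2))` for `Re s > 1`. The right side is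
holomorphic on `ℂ ∖ {1}`, so the identity theorem extends the equality there. At `s = -n` the
Hurwitz values `ζ(-n, a) = -B_{n+1}(a)/(n+1)` turn it into
`F_n(x) = 2^{n+1}/(n+1) (B_{n+1}((x+1)/2) - B_{n+1}(x/2))`, and `F_n = E_n` because `F_n`
satisfies the defining recurrence: the addition formula for Bernoulli polynomials makes `F` an
Appell sequence, `∑_k C(n,k) F_k(x) = F_n(x+1)`, while `B_{n+1}(u+1) - B_{n+1}(u) = (n+1) u^n`
gives `F_n(x+1) + F_n(x) = 2 x^n`.
-/

open Finset Polynomial HurwitzZeta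

section Bernoulli

variable {A : Type*} [CommRing A] [Algebra ℚ A]

theorem aeval_bernoulli (m : ℕ) (u : A) :
    aeval u (bernoulli m) =
      ∑ i ∈ range (m + 1), algebraMap ℚ A (_root_.bernoulli i) * m.choose i * u ^ (m - i) := by
  simp [Polynomial.bernoulli, aeval_monomial, mul_comm]

theorem aeval_bernoulli_add (m : ℕ) (u v : A) :
    aeval (u + v) (bernoulli m) =
      ∑ j ∈ range (m + 1), m.choose j * aeval u (bernoulli j) * v ^ (m - j) := by
  have hchoose : ∀ i j, i ≤ j →
      (m.choose i * (m - i).choose (j - i) : A) = m.choose j * j.choose i := fun i j hij =>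
    mod_cast congrArg (Nat.cast (R := A)) (Nat.choose_mul (n := m) hij).symm
  calc aeval (u + v) (bernoulli m)
      = ∑ i ∈ range (m + 1), ∑ j ∈ Ico i (m + 1), algebraMap ℚ A (_root_.bernoulli i) *
          (m.choose i * (m - i).choose (j - i)) * u ^ (j - i) * v ^ (m - j) := by
        rw [aeval_bernoulli]
        refine sum_congr rfl fun i hi => ?_
        rw [add_pow, sum_Ico_eq_sum_range, mul_sum]
        have hlen : m + 1 - i = m - i + 1 := by have := mem_range.1 hi; omega
        rw [hlen]
        refine sum_congr rfl fun r _ => ?_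
        simp only [Nat.add_sub_cancel_left, Nat.sub_add_eq]
        ring
    _ = ∑ j ∈ range (m + 1), ∑ i ∈ range (j + 1), algebraMap ℚ A (_root_.bernoulli i) *
          (m.choose i * (m - i).choose (j - i)) * u ^ (j - i) * v ^ (m - j) := by
        simp only [range_eq_Ico]
        exact sum_Ico_Ico_comm _ _ _
    _ = _ := by
        refine sum_congr rfl fun j _ => ?_
        rw [aeval_bernoulli, mul_sum, sum_mul]
        refine sum_congr rfl fun i hi => ?_
        rw [hchoose i j (mem_range_succ_iff.1 hi)]
        ring

theorem aeval_bernoulli_one_add (m : ℕ) (u : A) :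
    aeval (1 + u) (bernoulli m) = aeval u (bernoulli m) + m * u ^ (m - 1) := by
  simpa [aeval_comp] using congrArg (aeval u) (bernoulli_comp_one_add_X m)

end Bernoulli

theorem eulerPoly_eq (n : ℕ) :
    eulerPoly n = X ^ n - C (1 / 2 : ℚ) * ∑ k : Fin n, C (n.choose k : ℚ) * eulerPoly k := by
  simp only [eulerPoly, Nat.strongRecOn]
  rw [WellFounded.fix_eq]

section EulerBernoulli

variable {K : Type*} [Field K] [CharZero K]

noncomputable def eulerFromBernoulli (n : ℕ) (x : K) : K :=
  2 ^ (n + 1) / (n + 1) *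
    (aeval ((x + 1) / 2) (bernoulli (n + 1)) - aeval (x / 2) (bernoulli (n + 1)))

theorem eulerFromBernoulli_add_one_add (n : ℕ) (x : K) :
    eulerFromBernoulli n (x + 1) + eulerFromBernoulli n x = 2 * x ^ n := by
  have hshift := aeval_bernoulli_one_add (n + 1) (x / 2)
  rw [show 1 + x / 2 = (x + 1 + 1) / 2 by ring, Nat.add_sub_cancel] at hshift
  simp only [eulerFromBernoulli, ← mul_add, sub_add_sub_cancel, hshift, div_pow]
  field_simp
  push_cast
  ring

theorem eulerFromBernoulli_add_one (n : ℕ) (x : K) :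
    eulerFromBernoulli n (x + 1) = ∑ k ∈ range (n + 1), n.choose k * eulerFromBernoulli k x := by
  set D : ℕ → K := fun j => aeval ((x + 1) / 2) (bernoulli j) - aeval (x / 2) (bernoulli j)
  have hD0 : D 0 = 0 := by simp [D]
  have hhalf : ∀ u : K, aeval (u + 2⁻¹) (bernoulli (n + 1)) * 2 ^ (n + 1) =
      ∑ j ∈ range (n + 2), ((n + 1).choose j : K) * 2 ^ j * aeval u (bernoulli j) := by
    intro u
    rw [aeval_bernoulli_add, sum_mul]
    refine sum_congr rfl fun j hj => ?_
    have hsplit : (2 : K) ^ (n + 1) = 2 ^ j * 2 ^ (n + 1 - j) := by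
      rw [← pow_add, Nat.add_sub_cancel' (mem_range_succ_iff.1 hj)]
    rw [inv_pow, hsplit]
    field_simp
  calc eulerFromBernoulli n (x + 1)
      = ((n : K) + 1)⁻¹ * ∑ j ∈ range (n + 2), ((n + 1).choose j : K) * 2 ^ j * D j := by
        have h1 := hhalf ((x + 1) / 2)
        have h2 := hhalf (x / 2)
        rw [show (x + 1) / 2 + 2⁻¹ = (x + 1 + 1) / 2 by ring] at h1
        rw [show x / 2 + 2⁻¹ = (x + 1) / 2 by ring] at h2
        simp only [D, mul_sub, sum_sub_distrib, ← h1, ← h2, eulerFromBernoulli]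
        field_simp
    _ = _ := by
        rw [sum_range_succ', hD0, mul_zero, add_zero, mul_sum]
        refine sum_congr rfl fun k _ => ?_
        have hc : ((n + 1).choose (k + 1) : K) * (k + 1) = (n + 1) * n.choose k := by
          exact_mod_cast (Nat.add_one_mul_choose_eq n k).symm
        simp only [eulerFromBernoulli, D]
        field_simp
        linear_combination
          (aeval ((x + 1) / 2) (bernoulli (k + 1)) - aeval (x / 2) (bernoulli (k + 1))) * hc


theorem aeval_eulerPoly (n : ℕ) (x : K) : aeval x (eulerPoly n) = eulerFromBernoulli n x := by
  induction n using Nat.strong_induction_on with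
  | _ n ih =>
    have hrec : ∑ k ∈ range n, (n.choose k : K) * eulerFromBernoulli k x =
        2 * x ^ n - 2 * eulerFromBernoulli n x := by
      have h1 := eulerFromBernoulli_add_one n x
      rw [sum_range_succ, Nat.choose_self, Nat.cast_one, one_mul] at h1
      linear_combination eulerFromBernoulli_add_one_add n x - h1
    rw [eulerPoly_eq]
    simp only [map_sub, map_mul, map_sum, map_pow, aeval_X, aeval_C, eq_ratCast]
    rw [Fin.sum_univ_eq_sum_range (fun k => ((n.choose k : ℚ) : K) * aeval x (eulerPoly k))]
    rw [sum_congr rfl fun k hk => by rw [ih k (mem_range.1 hk), Rat.cast_natCast], hrec]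
    push_cast
    ring

end EulerBernoulli

theorem one_div_two_mul_cpow {z : ℝ} (hz : 0 ≤ z) (s : ℂ) :
    1 / (2 * (z : ℂ)) ^ s = 2 ^ (-s) * (1 / (z : ℂ) ^ s) := by
  rw [show (2 : ℂ) = ((2 : ℝ) : ℂ) by norm_num, Complex.mul_cpow_ofReal_nonneg zero_le_two hz,
    Complex.cpow_neg]
  field_simp

theorem hasSum_alternating_cpow {x : ℝ} (hx : x ∈ Set.Icc 0 1) {s : ℂ} (hs : 1 < s.re) :
    HasSum (fun m : ℕ => (-1 : ℂ) ^ m / (m + x) ^ s)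
      (2 ^ (-s) * (hurwitzZeta ↑(x / 2) s - hurwitzZeta ↑((x + 1) / 2) s)) := by
  have hhalf : ∀ (k : ℕ) (a : ℝ), 0 ≤ a →
      1 / (((2 * k : ℕ) : ℂ) + ↑(2 * a)) ^ s = 2 ^ (-s) * (1 / ((k : ℂ) + ↑a) ^ s) := by
    intro k a ha
    have hka : (0 : ℝ) ≤ k + a := by positivity
    have h := one_div_two_mul_cpow hka s
    push_cast at h ⊢
    rw [← h, mul_add]
  obtain ⟨hx0, hx1⟩ := hx
  rw [mul_sub, sub_eq_add_neg]
  refine HasSum.even_add_odd ?_ ?_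
  · refine ((hasSum_hurwitzZeta_of_one_lt_re (a := x / 2) ⟨by linarith, by linarith⟩ hs).mul_left
      (2 ^ (-s))).congr_fun fun k => ?_
    rw [pow_mul, neg_one_sq, one_pow, ← hhalf k _ (by linarith), mul_div_cancel₀ _ two_ne_zero]
  · refine ((hasSum_hurwitzZeta_of_one_lt_re (a := (x + 1) / 2) ⟨by linarith, by linarith⟩
      hs).mul_left (2 ^ (-s))).neg.congr_fun fun k => ?_
    rw [pow_succ, pow_mul, neg_one_sq, one_pow, ← hhalf k _ (by linarith)]
    push_cast
    ring_nf

noncomputable def eulerZeta (x : ℝ) (s : ℂ) : ℂ :=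
  2 * 2 ^ (-s) * (hurwitzZeta ↑(x / 2) s - hurwitzZeta ↑((x + 1) / 2) s)

theorem eulerZeta_eq_tsum {x : ℝ} (hx : x ∈ Set.Icc 0 1) {s : ℂ} (hs : 1 < s.re) :
    eulerZeta x s = 2 * ∑' m : ℕ, (-1 : ℂ) ^ m / (m + x) ^ s := by
  rw [eulerZeta, mul_assoc, (hasSum_alternating_cpow hx hs).tsum_eq]

theorem differentiableOn_eulerZeta (x : ℝ) : DifferentiableOn ℂ (eulerZeta x) {1}ᶜ :=
  fun _ hs => ((differentiableAt_const _).mul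
    ((differentiableAt_id.neg).const_cpow (Or.inl two_ne_zero))).mul
    ((differentiableAt_hurwitzZeta _ hs).sub (differentiableAt_hurwitzZeta _ hs))
    |>.differentiableWithinAt

theorem eqOn_compl_one_of_eq_of_one_lt_re {f g : ℂ → ℂ} (hf : DifferentiableOn ℂ f {1}ᶜ)
    (hg : DifferentiableOn ℂ g {1}ᶜ) (hfg : ∀ s : ℂ, 1 < s.re → f s = g s) :
    Set.EqOn f g {1}ᶜ := by
  have hopen : IsOpen ({1}ᶜ : Set ℂ) := isOpen_compl_singleton
  have hconn : IsPreconnected ({1}ᶜ : Set ℂ) :=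
    (isConnected_compl_singleton_of_one_lt_rank (by simp) 1).isPreconnected
  have hnear : f =ᶠ[nhds 2] g := by
    filter_upwards [(isOpen_lt continuous_const Complex.continuous_re).mem_nhds
      (show (1 : ℝ) < (2 : ℂ).re by norm_num)] using hfg
  exact (hf.analyticOnNhd hopen).eqOn_of_preconnected_of_eventuallyEq (hg.analyticOnNhd hopen)
    hconn (by norm_num) hnear

theorem eulerZeta_neg_nat {n : ℕ} (hn : n ≠ 0) {x : ℝ} (hx : x ∈ Set.Icc 0 1) :
    eulerZeta x (-n) = ((aeval x (eulerPoly n) : ℝ) : ℂ) := by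
  obtain ⟨hx0, hx1⟩ := hx
  rw [eulerZeta, hurwitzZeta_neg_nat hn ⟨by linarith, by linarith⟩,
    hurwitzZeta_neg_nat hn ⟨by linarith, by linarith⟩, neg_neg, Complex.cpow_natCast,
    ← Complex.coe_algebraMap, ← aeval_algebraMap_apply, aeval_eulerPoly, eulerFromBernoulli]
  simp only [eval_map_algebraMap, Complex.coe_algebraMap]
  push_cast
  ring

theorem stmt_8 (x : ℝ) (hx0 : 0 < x) (hx1 : x < 1) (n : ℕ) (hn : 0 < n)
    (zetaE : ℂ → ℂ) (hdiff : Differentiable ℂ zetaE)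
    (hval : ∀ s : ℂ, 1 < s.re → zetaE s = 2 * ∑' m : ℕ, (-1 : ℂ) ^ m / ((m : ℂ) + (x : ℂ)) ^ s) :
    zetaE (-(n : ℂ)) = ((Polynomial.aeval x (eulerPoly n) : ℝ) : ℂ) := by
  have hx : x ∈ Set.Icc 0 1 := ⟨hx0.le, hx1.le⟩
  have heq : Set.EqOn zetaE (eulerZeta x) {1}ᶜ :=
    eqOn_compl_one_of_eq_of_one_lt_re hdiff.differentiableOn (differentiableOn_eulerZeta x)
      fun s hs => (hval s hs).trans (eulerZeta_eq_tsum hx hs).symm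
  have hn1 : -(n : ℂ) ≠ 1 := fun h => by
    have hre := congrArg Complex.re h
    simp only [Complex.neg_re, Complex.natCast_re, Complex.one_re] at hre
    linarith [(n.cast_nonneg : (0 : ℝ) ≤ n)]
  rw [heq hn1, eulerZeta_neg_nat hn.ne' hx]
end
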